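/- (Cubic spline kernel.) Define the cubic spline profile Ŵ : [0,∞) → ℝ by Ŵ(R) = 1 − 6R² + 6R³ for 0 ≤ R < 1/2, Ŵ(R) = 2(1 − R)³ for 1/2 ≤ R < 1, and Ŵ(R) = 0 for R ≥ 1. Then: (i) Ŵ is nonnegative and continuously differentiable on [0,∞); (ii) Ŵ is nonincreasing, i.e. Ŵ'(R) ≤ 0 for all R ≥ 0 (so the associated radial kernel satisfies the decay condition); and (iii) for every h > 0, ∫_ℝ (4/3)·(1/h)·Ŵ(|x|/h) dx = 1, i.e. with normalization factor σ₁ = 4/3 the one-dimensional cubic spline kernel W(x) = (σ₁/h)·Ŵ(|x|/h) satisfies the normalization condition ∫_ℝ W(x) dx = 1. -/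

import Mathlib

open scoped BigOperators RealInnerProductSpace
open Finset MeasureTheory

noncomputable section

/-- `ℝ^d` as Euclidean space. -/
abbrev Ed (d : ℕ) : Type := EuclideanSpace ℝ (Fin d)

/-- Value of the radial smoothing kernel `W(x) = (σ/h^d)·Ŵ(‖x‖/h)`,
with profile `P = Ŵ`. -/
def Wval (d : ℕ) (σ h : ℝ) (P : ℝ → ℝ) (x : Ed d) : ℝ :=
  (σ / h ^ d) * P (‖x‖ / h)

/-- Gradient of the radial smoothing kernel:
`∇W(x) = (σ/h^{d+1})·Ŵ'(‖x‖/h)·x/‖x‖` for `x ≠ 0`. -/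
def gradW (d : ℕ) (σ h : ℝ) (P : ℝ → ℝ) (x : Ed d) : Ed d :=
  ((σ / h ^ (d + 1)) * deriv P (‖x‖ / h) / ‖x‖) • x

/-- Multi-index power `v^α = v_1^{α_1}⋯v_d^{α_d}`. -/
def mpow {d : ℕ} (v : Ed d) (α : Fin d → ℕ) : ℝ := ∏ k, (v k) ^ (α k)

/-- Total degree `|α| = α_1 + ⋯ + α_d` of a multi-index. -/
def deg {d : ℕ} (α : Fin d → ℕ) : ℕ := ∑ k, α k

/-- Partial derivative along the `k`-th coordinate. -/
def pd {d : ℕ} (k : Fin d) (f : Ed d → ℝ) : Ed d → ℝ :=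
  fun x => fderiv ℝ f x (EuclideanSpace.single k 1)

/-- Mixed partial derivative `D^α f`. -/
def Dmix {d : ℕ} (α : Fin d → ℕ) (f : Ed d → ℝ) : Ed d → ℝ :=
  (List.finRange d).foldr (fun k g => (pd k)^[α k] g) f

/-- Laplacian `Δf = ∑_k ∂_k∂_k f`. -/
def lapl {d : ℕ} (f : Ed d → ℝ) : Ed d → ℝ := fun x => ∑ k, pd k (pd k f) x

/-- Variable coefficient elliptic operator `∇·(a∇f) = aΔf + ∇a·∇f`. -/
def ellip {d : ℕ} (a f : Ed d → ℝ) : Ed d → ℝ :=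
  fun x => a x * lapl f x + ∑ k, pd k a x * pd k f x

/-- The closed cube `Ω = [0,l]^d`. -/
def cube (d : ℕ) (l : ℝ) : Set (Ed d) := {x | ∀ k, x k ∈ Set.Icc 0 l}

/-- The `C^n(Ω)` norm: the max over multi-indices `α` with `|α| ≤ n` of
`sup_{x ∈ Ω} |D^α f x|`. -/
def Cnorm {d : ℕ} (n : ℕ) (f : Ed d → ℝ) (Ω : Set (Ed d)) : ℝ :=
  sSup {y : ℝ | ∃ α : Fin d → ℕ, deg α ≤ n ∧ ∃ x ∈ Ω, y = |Dmix α f x|}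

/-- The cubic spline profile. -/
def cubicSpline (R : ℝ) : ℝ :=
  if R < 1 / 2 then 1 - 6 * R ^ 2 + 6 * R ^ 3
  else if R < 1 then 2 * (1 - R) ^ 3
  else 0

open Set Filter Topology Asymptotics

/-! The two pieces of the profile glue into `Ŵ(R) = 2 (1 - R)₊³ - (1 - 2R)₊³`, and `s ↦ s₊ⁿ` is
`C¹` for `n ≥ 2`. This closed form gives the derivative `-6 (1 - R)₊² + 6 (1 - 2R)₊²`, which is
`≤ 0` on `[0, ∞)` because `(1 - 2R)₊ ≤ (1 - R)₊` there, and the antiderivative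
`(1 - 2R)₊⁴ / 8 - (1 - R)₊⁴ / 2`, so `∫₀^∞ Ŵ = 3/8`; the normalization follows by the substitution
`x = h u` and the symmetry of `|x|`. -/

theorem hasDerivAt_max_zero_pow {n : ℕ} (hn : 2 ≤ n) (t : ℝ) :
    HasDerivAt (fun s : ℝ => max s 0 ^ n) (n * max t 0 ^ (n - 1)) t := by
  rcases lt_trichotomy t 0 with ht | rfl | ht
  · have hzero : (fun s : ℝ => max s 0 ^ n) =ᶠ[𝓝 t] fun _ => 0 := by
      filter_upwards [Iio_mem_nhds ht] with s hs
      rw [max_eq_right hs.le, zero_pow (by omega)]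
    rw [max_eq_right ht.le, zero_pow (by omega), mul_zero]
    exact (hasDerivAt_const t 0).congr_of_eventuallyEq hzero
  · rw [max_self, zero_pow (by omega), mul_zero, hasDerivAt_iff_isLittleO_nhds_zero]
    have hbound : (fun s : ℝ => max s 0 ^ n) =O[𝓝 0] fun s => s ^ n :=
      IsBigO.of_bound 1 <| Eventually.of_forall fun s => by
        rw [one_mul, norm_pow, norm_pow]
        gcongr
        rw [Real.norm_of_nonneg (le_max_right s 0), Real.norm_eq_abs]
        exact max_le (le_abs_self s) (abs_nonneg s)
    simpa [zero_pow (show n ≠ 0 by omega)] using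
      hbound.trans_isLittleO (isLittleO_pow_id (by omega))
  · have hpow : (fun s : ℝ => max s 0 ^ n) =ᶠ[𝓝 t] fun s => s ^ n := by
      filter_upwards [Ioi_mem_nhds ht] with s hs
      rw [max_eq_left hs.le]
    rw [max_eq_left ht.le]
    exact (hasDerivAt_pow n t).congr_of_eventuallyEq hpow

theorem HasDerivAt.max_zero_pow {f : ℝ → ℝ} {f' x : ℝ} {n : ℕ} (hn : 2 ≤ n)
    (hf : HasDerivAt f f' x) :
    HasDerivAt (fun s => max (f s) 0 ^ n) (n * max (f x) 0 ^ (n - 1) * f') x :=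
  (hasDerivAt_max_zero_pow hn (f x)).comp x hf

theorem cubicSpline_eq (R : ℝ) :
    cubicSpline R = 2 * max (1 - R) 0 ^ 3 - max (1 - 2 * R) 0 ^ 3 := by
  unfold cubicSpline
  split_ifs with h₁ h₂
  · rw [max_eq_left (by linarith), max_eq_left (by linarith)]
    ring
  · rw [max_eq_left (by linarith), max_eq_right (by linarith)]
    ring
  · rw [max_eq_right (by linarith), max_eq_right (by linarith)]
    ring

theorem hasDerivAt_one_sub_mul (c x : ℝ) : HasDerivAt (fun s : ℝ => 1 - c * s) (-c) x := by
  simpa using ((hasDerivAt_id' x).const_mul c).const_sub 1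

theorem hasDerivAt_cubicSpline (R : ℝ) :
    HasDerivAt cubicSpline (-6 * max (1 - R) 0 ^ 2 + 6 * max (1 - 2 * R) 0 ^ 2) R := by
  have h₁ := (hasDerivAt_one_sub_mul 1 R).max_zero_pow (n := 3) (by norm_num)
  have h₂ := (hasDerivAt_one_sub_mul 2 R).max_zero_pow (n := 3) (by norm_num)
  simp only [one_mul] at h₁
  rw [funext cubicSpline_eq]
  exact ((h₁.const_mul 2).sub h₂).congr_deriv (by norm_num; ring)

theorem hasDerivAt_cubicSpline_antideriv (R : ℝ) :
    HasDerivAt (fun s => max (1 - 2 * s) 0 ^ 4 / 8 - max (1 - s) 0 ^ 4 / 2) (cubicSpline R) R := by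
  have h₁ := (hasDerivAt_one_sub_mul 1 R).max_zero_pow (n := 4) (by norm_num)
  have h₂ := (hasDerivAt_one_sub_mul 2 R).max_zero_pow (n := 4) (by norm_num)
  simp only [one_mul] at h₁
  rw [cubicSpline_eq]
  exact ((h₂.div_const 8).sub (h₁.div_const 2)).congr_deriv (by norm_num; ring)

theorem contDiff_cubicSpline : ContDiff ℝ 1 cubicSpline := by
  rw [contDiff_one_iff_deriv]
  refine ⟨fun R => (hasDerivAt_cubicSpline R).differentiableAt, ?_⟩
  rw [funext fun R => (hasDerivAt_cubicSpline R).deriv]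
  fun_prop

theorem max_one_sub_two_mul_le {R : ℝ} (hR : 0 ≤ R) : max (1 - 2 * R) 0 ≤ max (1 - R) 0 :=
  max_le_max_right 0 (by linarith)

theorem cubicSpline_nonneg {R : ℝ} (hR : 0 ≤ R) : 0 ≤ cubicSpline R := by
  rw [cubicSpline_eq]
  have := pow_le_pow_left₀ (le_max_right _ 0) (max_one_sub_two_mul_le hR) 3
  nlinarith [pow_nonneg (le_max_right (1 - R) 0) 3]

theorem deriv_cubicSpline_nonpos {R : ℝ} (hR : 0 ≤ R) : deriv cubicSpline R ≤ 0 := by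
  rw [(hasDerivAt_cubicSpline R).deriv]
  linarith [pow_le_pow_left₀ (le_max_right _ 0) (max_one_sub_two_mul_le hR) 2]

theorem integral_Ioi_cubicSpline : ∫ R in Ioi 0, cubicSpline R = 3 / 8 := by
  have hvanish : ∀ R ∈ Ioi (0 : ℝ) \ Ioc 0 1, cubicSpline R = 0 := fun R ⟨hpos, hout⟩ => by
    have : 1 < R := not_le.mp fun hle => hout ⟨hpos, hle⟩
    rw [cubicSpline_eq, max_eq_right (by linarith), max_eq_right (by linarith)]
    norm_num
  rw [setIntegral_eq_of_subset_of_forall_sdiff_eq_zero measurableSet_Ioi Ioc_subset_Ioi_self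
    hvanish, ← intervalIntegral.integral_of_le zero_le_one,
    intervalIntegral.integral_eq_sub_of_hasDerivAt (fun R _ => hasDerivAt_cubicSpline_antideriv R)
      (contDiff_cubicSpline.continuous.intervalIntegrable 0 1)]
  norm_num

theorem integral_comp_abs_div (f : ℝ → ℝ) {h : ℝ} (hh : 0 < h) :
    ∫ x, f (|x| / h) = 2 * h * ∫ R in Ioi 0, f R := by
  have habs : ∀ x : ℝ, |x| / h = |x / h| := fun x => by rw [abs_div, abs_of_pos hh]
  simp_rw [habs]
  rw [Measure.integral_comp_div (fun u => f |u|), integral_comp_abs, abs_of_pos hh, smul_eq_mul]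
  ring

/-- Cubic spline kernel: the cubic spline profile is
nonnegative and continuously differentiable on `[0,∞)`, nonincreasing
(decay condition), and with `σ₁ = 4/3` the associated one-dimensional kernel
is normalized: `∫_ℝ (4/3)(1/h)Ŵ(|x|/h) dx = 1`. -/
theorem stmt_14 :
    (∀ R : ℝ, 0 ≤ R → 0 ≤ cubicSpline R) ∧
    ContDiffOn ℝ 1 cubicSpline (Set.Ici 0) ∧
    (∀ R : ℝ, 0 ≤ R → deriv cubicSpline R ≤ 0) ∧
    (∀ h : ℝ, 0 < h →
      ∫ x : ℝ, (4 / 3) * (1 / h) * cubicSpline (|x| / h) = 1) := by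
  refine ⟨fun R => cubicSpline_nonneg, contDiff_cubicSpline.contDiffOn,
    fun R => deriv_cubicSpline_nonpos, fun h hh => ?_⟩
  rw [integral_const_mul, integral_comp_abs_div _ hh, integral_Ioi_cubicSpline]
  field_simp
  norm_num
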